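/- arXiv:1803.02183 — 2 statements merged into one kernel-verified Lean document; each statement's English description precedes it below -/
import Mathlib

section
/- Let R be a discrete valuation ring with uniformizer π and fraction field K, let A° be an R-algebra, and let 𝒰 be a right A°-module. Let M be a K-vector space with two equivalent norms with unit balls M°₁ and M°₂ that are A°-submodules. Then for every s ≥ 0, the R-modules Tor_s^{A°}(𝒰, M°₁) and Tor_s^{A°}(𝒰, M°₂) are isomorphic in the quotient category R-mod/(bounded π-torsion modules); in particular one has bounded π-torsion if and only if the other does. -/
open CategoryTheory

universe u

/-- The `s`-th Tor group `Tor_s^{A°}(𝒰, M)` of two `A°`-modules. -/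
noncomputable def TorGroup (Ao : Type u) [CommRing Ao] (𝒰 : Type u) [AddCommGroup 𝒰]
    [Module Ao 𝒰] (s : ℕ) (M : Type u) [AddCommGroup M] [Module Ao M] :
    ModuleCat.{u} Ao :=
  ((Tor (ModuleCat.{u} Ao) s).obj (ModuleCat.of Ao 𝒰)).obj (ModuleCat.of Ao M)

section Aux

open CategoryTheory Limits

/-- homology of complexes is linear -/
lemma aux_homologyMap_smul {Ro : Type*} [CommRing Ro] {C : Type*} [Category C] [Preadditive C]
    [CategoryTheory.Linear Ro C] {ι : Type*} {cs : ComplexShape ι} [CategoryWithHomology C]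
    {K L : HomologicalComplex C cs} (f : K ⟶ L) (r : Ro) (i : ι) :
    HomologicalComplex.homologyMap (r • f) i = r • HomologicalComplex.homologyMap f i := by
  dsimp [HomologicalComplex.homologyMap]
  have : (HomologicalComplex.shortComplexFunctor C cs i).map (r • f)
      = r • (HomologicalComplex.shortComplexFunctor C cs i).map f := rfl
  rw [this, ShortComplex.homologyMap_smul]
  rfl

/-- The Tor functor in the second variable sends `c • 𝟙` to `c • 𝟙`. -/
lemma tor_map_smul_id (Ao : Type u) [CommRing Ao] (U X : ModuleCat.{u} Ao) (s : ℕ) (c : Ao) :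
    ((Tor (ModuleCat.{u} Ao) s).obj U).map (c • 𝟙 X) =
      c • 𝟙 (((Tor (ModuleCat.{u} Ao) s).obj U).obj X) := by
  let F := (MonoidalCategory.tensoringLeft (ModuleCat.{u} Ao)).obj U
  obtain ⟨P⟩ : Nonempty (ProjectiveResolution X) := HasProjectiveResolution.out
  have comm : (c • 𝟙 P.complex).f 0 ≫ P.π.f 0 = P.π.f 0 ≫ (c • 𝟙 X) := by
    ext x
    change (P.π.f 0).hom (c • x) = c • (P.π.f 0).hom x
    exact map_smul (P.π.f 0).hom c x
  have h := ProjectiveResolution.isoLeftDerivedObj_hom_naturality (c • 𝟙 X) P P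
      (c • 𝟙 P.complex) comm F s
  have h2 : (F.mapHomologicalComplex (ComplexShape.down ℕ)).map (c • 𝟙 P.complex)
      = c • 𝟙 ((F.mapHomologicalComplex (ComplexShape.down ℕ)).obj P.complex) := by
    rw [Functor.map_smul, CategoryTheory.Functor.map_id]
  rw [Functor.comp_map, h2] at h
  have h3 : (HomologicalComplex.homologyFunctor (ModuleCat.{u} Ao) (ComplexShape.down ℕ) s).map
      (c • 𝟙 ((F.mapHomologicalComplex (ComplexShape.down ℕ)).obj P.complex))
      = c • 𝟙 _ := by
    dsimp [HomologicalComplex.homologyFunctor]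
    rw [aux_homologyMap_smul, HomologicalComplex.homologyMap_id]
    rfl
  rw [h3] at h
  have key : (F.leftDerived s).map (c • 𝟙 X)
      = (P.isoLeftDerivedObj F s).hom ≫ (c • 𝟙 _) ≫ (P.isoLeftDerivedObj F s).inv := by
    rw [← Category.assoc, ← h, Category.assoc, Iso.hom_inv_id, Category.comp_id]
  have : ((Tor (ModuleCat.{u} Ao) s).obj U).map (c • 𝟙 X) = (F.leftDerived s).map (c • 𝟙 X) := rfl
  rw [this, key, Linear.smul_comp, Category.id_comp, Linear.comp_smul, Iso.hom_inv_id]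
  rfl

end Aux

/-- Let `R` be a discrete valuation ring with uniformizer `π`, `A°` an
`R`-algebra, and `𝒰` a fixed `A°`-module.  Let `M°₁`, `M°₂` be the unit balls of two
equivalent norms on a `K`-vector space `M` (i.e. `π^a M°₁ ⊆ M°₂` and `π^b M°₂ ⊆ M°₁`
for some `a`, `b`), both `A°`-submodules of `M`.  Then for every `s ≥ 0` the `R`-modules
`Tor_s^{A°}(𝒰, M°₁)` and `Tor_s^{A°}(𝒰, M°₂)` become isomorphic in the quotient category
`R-mod / (bounded π-torsion)`: there is a morphism between them whose kernel and cokernel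
are killed by a power of `π`.  In particular one has bounded `π`-torsion iff the other
does. -/
theorem stmt_6 {R : Type u} [CommRing R] [IsDomain R] [IsDiscreteValuationRing R]
    (π : R) (hπ : Irreducible π)
    (Ao : Type u) [CommRing Ao] [Algebra R Ao]
    (𝒰 : Type u) [AddCommGroup 𝒰] [Module Ao 𝒰]
    (M : Type u) [AddCommGroup M] [Module Ao M]
    (M₁ M₂ : Submodule Ao M) (a b : ℕ)
    (h₁₂ : ∀ x ∈ M₁, (algebraMap R Ao π) ^ a • x ∈ M₂)
    (h₂₁ : ∀ x ∈ M₂, (algebraMap R Ao π) ^ b • x ∈ M₁) :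
    ∀ s : ℕ,
      (∃ g : TorGroup Ao 𝒰 s ↥M₁ ⟶ TorGroup Ao 𝒰 s ↥M₂,
        (∃ k : ℕ, ∀ x : TorGroup Ao 𝒰 s ↥M₁, g x = 0 → (algebraMap R Ao π) ^ k • x = 0) ∧
        (∃ k : ℕ, ∀ y : TorGroup Ao 𝒰 s ↥M₂,
          ∃ x : TorGroup Ao 𝒰 s ↥M₁, g x = (algebraMap R Ao π) ^ k • y)) ∧
      ((∃ k : ℕ, ∀ x : TorGroup Ao 𝒰 s ↥M₁,
          (∃ n : ℕ, (algebraMap R Ao π) ^ n • x = 0) → (algebraMap R Ao π) ^ k • x = 0) ↔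
       (∃ k : ℕ, ∀ y : TorGroup Ao 𝒰 s ↥M₂,
          (∃ n : ℕ, (algebraMap R Ao π) ^ n • y = 0) → (algebraMap R Ao π) ^ k • y = 0)) := by
  intro s
  set c : Ao := algebraMap R Ao π with hc
  let G := (Tor (ModuleCat.{u} Ao) s).obj (ModuleCat.of Ao 𝒰)
  -- the two multiplication maps
  let l₁₂ : ↥M₁ →ₗ[Ao] ↥M₂ :=
    { toFun := fun x => ⟨c ^ a • (x : M), h₁₂ x x.2⟩
      map_add' := fun x y => Subtype.ext (by simp [smul_add])
      map_smul' := fun r x => Subtype.ext (by simp [smul_comm r (c ^ a)]) }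
  let l₂₁ : ↥M₂ →ₗ[Ao] ↥M₁ :=
    { toFun := fun x => ⟨c ^ b • (x : M), h₂₁ x x.2⟩
      map_add' := fun x y => Subtype.ext (by simp [smul_add])
      map_smul' := fun r x => Subtype.ext (by simp [smul_comm r (c ^ b)]) }
  let f₁₂ : ModuleCat.of Ao ↥M₁ ⟶ ModuleCat.of Ao ↥M₂ := ModuleCat.ofHom l₁₂
  let f₂₁ : ModuleCat.of Ao ↥M₂ ⟶ ModuleCat.of Ao ↥M₁ := ModuleCat.ofHom l₂₁
  have hcomp₁ : f₁₂ ≫ f₂₁ = c ^ (a + b) • 𝟙 (ModuleCat.of Ao ↥M₁) := by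
    apply ModuleCat.hom_ext
    apply LinearMap.ext; intro x
    refine Subtype.ext ?_
    show c ^ b • (c ^ a • (x : M)) = c ^ (a + b) • (x : M)
    rw [smul_smul, ← pow_add, Nat.add_comm b a]
  have hcomp₂ : f₂₁ ≫ f₁₂ = c ^ (a + b) • 𝟙 (ModuleCat.of Ao ↥M₂) := by
    apply ModuleCat.hom_ext
    apply LinearMap.ext; intro x
    refine Subtype.ext ?_
    show c ^ a • (c ^ b • (x : M)) = c ^ (a + b) • (x : M)
    rw [smul_smul, ← pow_add]
  let g : TorGroup Ao 𝒰 s ↥M₁ ⟶ TorGroup Ao 𝒰 s ↥M₂ := G.map f₁₂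
  let h : TorGroup Ao 𝒰 s ↥M₂ ⟶ TorGroup Ao 𝒰 s ↥M₁ := G.map f₂₁
  have hg : ∀ x : TorGroup Ao 𝒰 s ↥M₁, h (g x) = c ^ (a + b) • x := by
    intro x
    have : g ≫ h = c ^ (a + b) • 𝟙 (TorGroup Ao 𝒰 s ↥M₁) := by
      show G.map f₁₂ ≫ G.map f₂₁ = _
      rw [← G.map_comp, hcomp₁]
      exact tor_map_smul_id Ao (ModuleCat.of Ao 𝒰) (ModuleCat.of Ao ↥M₁) s (c ^ (a + b))
    have := congrArg (fun φ => (ConcreteCategory.hom φ) x) this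
    simpa using this
  have hh : ∀ y : TorGroup Ao 𝒰 s ↥M₂, g (h y) = c ^ (a + b) • y := by
    intro y
    have : h ≫ g = c ^ (a + b) • 𝟙 (TorGroup Ao 𝒰 s ↥M₂) := by
      show G.map f₂₁ ≫ G.map f₁₂ = _
      rw [← G.map_comp, hcomp₂]
      exact tor_map_smul_id Ao (ModuleCat.of Ao 𝒰) (ModuleCat.of Ao ↥M₂) s (c ^ (a + b))
    have := congrArg (fun φ => (ConcreteCategory.hom φ) y) this
    simpa using this
  constructor
  · refine ⟨g, ⟨a + b, fun x hx => ?_⟩, ⟨a + b, fun y => ⟨h y, hh y⟩⟩⟩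
    rw [← hg x, hx, map_zero]
  · constructor
    · rintro ⟨k, hk⟩
      refine ⟨k + (a + b), fun y ⟨n, hn⟩ => ?_⟩
      have hx : c ^ n • (h y) = 0 := by
        rw [← map_smul (ConcreteCategory.hom h) (c ^ n) y, hn, map_zero]
      have := hk (h y) ⟨n, hx⟩
      have hgy : g (c ^ k • h y) = 0 := by rw [this, map_zero]
      rw [map_smul (ConcreteCategory.hom g) (c ^ k) (h y), hh y, smul_smul, ← pow_add] at hgy
      exact hgy
    · rintro ⟨k, hk⟩
      refine ⟨k + (a + b), fun x ⟨n, hn⟩ => ?_⟩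
      have hy : c ^ n • (g x) = 0 := by
        rw [← map_smul (ConcreteCategory.hom g) (c ^ n) x, hn, map_zero]
      have := hk (g x) ⟨n, hy⟩
      have hhx : h (c ^ k • g x) = 0 := by rw [this, map_zero]
      rw [map_smul (ConcreteCategory.hom h) (c ^ k) (g x), hg x, smul_smul, ← pow_add] at hhx
      exact hhx
end

section
/- Let K be a discretely valued nonarchimedean field with uniformizer π, and let M, N be semi-normed modules over a normed K-algebra A with φ: M → N a strict continuous A-module morphism. Then the completion φ̂: M̂ → N̂ is strict, ker φ̂ is the closure (completion) of ker φ, and im φ̂ is the completion of im φ. Consequently, a strict exact sequence of semi-normed A-modules remains exact after completion. -/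
open UniformSpace

/-- Strictness of a map of semi-normed groups: the canonical bijection
`coim φ → im φ` (quotient semi-norm to subspace semi-norm) is a homeomorphism. -/
def IsStrictMap {M N : Type*} [SeminormedAddCommGroup M] [SeminormedAddCommGroup N]
    (φ : M → N) : Prop :=
  Continuous φ ∧
    ∀ ε > (0 : ℝ), ∃ δ > (0 : ℝ), ∀ x : M, ‖φ x‖ < δ → ∃ y : M, φ y = φ x ∧ ‖y‖ < ε

open Filter

/-!
Strictness says that a small vector of `im φ` has a small preimage. In the completion this
first holds only approximately: a small `b` in the closure of `im φ̂` is a limit of small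
`φ m`, hence lies in the closure of `φ̂ (ball 0 ε)`. Completeness of `M̂` removes
the approximation, as in Banach's open mapping theorem: lift `b` up to an error, lift the error,
and sum the geometrically decreasing lifts. Applied to all of `closure (im φ̂)`, this gives both
strictness of `φ̂` and closedness of its image, so `im φ̂ = closure (im φ)`. The kernel is
handled directly: if `φ̂ x = 0`, a nearby `m ∈ M` has `φ m` small, and correcting `m` by a small
lift of `φ m` gives a point of `ker φ` near `x`. Exactness then follows from
`ker ψ̂ = closure (ker ψ) = closure (im φ) = im φ̂`.
-/

theorem AddMonoidHom.exists_preimage_norm_lt_of_mem_closure_image_ball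
    {E G : Type*} [SeminormedAddCommGroup E] [CompleteSpace E] [NormedAddCommGroup G]
    (F : E →+ G) (hF : Continuous F) {V : AddSubgroup G} (hV : F.range ≤ V)
    (happrox : ∀ ε > (0 : ℝ), ∃ δ > (0 : ℝ), ∀ b ∈ V, ‖b‖ < δ →
      b ∈ closure (F '' Metric.ball 0 ε)) :
    ∀ ε > (0 : ℝ), ∃ δ > (0 : ℝ), ∀ b ∈ V, ‖b‖ < δ → ∃ x, F x = b ∧ ‖x‖ < ε := by
  intro ε hε
  set r : ℕ → ℝ := fun k => ε / 2 / 2 / 2 ^ k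
  -- `δ k ≤ (1 / 2) ^ k` makes the residuals below tend to zero
  have hδ : ∀ k, ∃ δ > (0 : ℝ), δ ≤ (1 / 2) ^ k ∧
      ∀ b ∈ V, ‖b‖ < δ → b ∈ closure (F '' Metric.ball 0 (r k)) := fun k => by
    obtain ⟨δ, hδ, h⟩ := happrox (r k) (by positivity)
    exact ⟨min δ ((1 / 2) ^ k), by positivity, min_le_right _ _,
      fun b hb hbδ => h b hb (hbδ.trans_le (min_le_left _ _))⟩
  choose δ hδpos hδle hδ using hδ
  have hstep : ∀ k (c : G), ∃ x : E, c ∈ V → ‖c‖ < δ k → ‖x‖ < r k ∧ ‖c - F x‖ < δ (k + 1) := by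
    intro k c
    by_cases hc : c ∈ V ∧ ‖c‖ < δ k
    · obtain ⟨_, ⟨x, hx, rfl⟩, hcx⟩ :=
        Metric.mem_closure_iff.1 (hδ k c hc.1 hc.2) _ (hδpos (k + 1))
      exact ⟨x, fun _ _ => ⟨mem_ball_zero_iff.1 hx, by rwa [← dist_eq_norm]⟩⟩
    · exact ⟨0, fun h₁ h₂ => absurd ⟨h₁, h₂⟩ hc⟩
  choose step hstep using hstep
  refine ⟨δ 0, hδpos 0, fun b hb hbδ => ?_⟩
  -- residuals: `c k = b - F (x 0 + ⋯ + x (k - 1))`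
  let c : ℕ → G := fun k => Nat.rec b (fun k ck => ck - F (step k ck)) k
  let x : ℕ → E := fun k => step k (c k)
  have hc : ∀ k, c k ∈ V ∧ ‖c k‖ < δ k := by
    intro k
    induction k with
    | zero => exact ⟨hb, hbδ⟩
    | succ k ih =>
      exact ⟨V.sub_mem ih.1 (hV ⟨_, rfl⟩), (hstep k (c k) ih.1 ih.2).2⟩
  have hx : ∀ k, ‖x k‖ ≤ r k := fun k => (hstep k (c k) (hc k).1 (hc k).2).1.le
  have hpartial : ∀ k, F (∑ i ∈ Finset.range k, x i) = b - c k := by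
    intro k
    induction k with
    | zero => simp [c]
    | succ k ih =>
      rw [Finset.sum_range_succ, map_add, ih]
      show b - c k + F (x k) = b - (c k - F (x k))
      abel
  have hsum : HasSum x (∑' k, x k) :=
    (Summable.of_norm_bounded (hasSum_geometric_two' (ε / 2)).summable hx).hasSum
  refine ⟨∑' k, x k, ?_, ?_⟩
  · have hres : Tendsto c atTop (nhds 0) :=
      squeeze_zero_norm (fun k => (hc k).2.le.trans (hδle k))
        (tendsto_pow_atTop_nhds_zero_of_lt_one (by norm_num) (by norm_num))
    refine tendsto_nhds_unique ((hF.tendsto _).comp hsum.tendsto_sum_nat) ?_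
    simpa [Function.comp_def, hpartial] using tendsto_const_nhds.sub hres
  · calc ‖∑' k, x k‖ ≤ ε / 2 := tsum_of_norm_bounded (hasSum_geometric_two' (ε / 2)) hx
      _ < ε := half_lt_self hε

theorem UniformSpace.Completion.closure_range_map {α β : Type*} [UniformSpace α] [UniformSpace β]
    {f : α → β} (hf : UniformContinuous f) :
    closure (Set.range (Completion.map f)) = closure ((↑) '' Set.range f) := by
  refine subset_antisymm (closure_minimal (Set.range_subset_iff.2 fun x => ?_) isClosed_closure)
    (closure_mono ?_)
  · refine Completion.induction_on x (isClosed_closure.preimage Completion.continuous_map)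
      fun a => subset_closure ⟨f a, ⟨a, rfl⟩, (Completion.map_coe hf a).symm⟩
  · rintro _ ⟨_, ⟨a, rfl⟩, rfl⟩
    exact ⟨a, Completion.map_coe hf a⟩

namespace IsStrictMap

variable {M N Φ : Type*} [SeminormedAddCommGroup M] [SeminormedAddCommGroup N]
  [FunLike Φ M N] [AddMonoidHomClass Φ M N] {φ : Φ}

theorem uniformContinuous (hφ : IsStrictMap φ) : UniformContinuous φ :=
  uniformContinuous_addMonoidHom_of_continuous hφ.1

theorem setOf_completion_map_eq_zero (hφ : IsStrictMap φ) :
    {x : Completion M | Completion.map φ x = 0} =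
      closure ((↑) '' {m : M | φ m = 0}) := by
  refine subset_antisymm (fun x hx => Metric.mem_closure_iff.2 fun ε hε => ?_)
    (closure_minimal ?_ (isClosed_eq Completion.continuous_map continuous_const))
  · obtain ⟨δ, hδ, hlift⟩ := hφ.2 (ε / 2) (half_pos hε)
    have hopen : IsOpen (Metric.ball x (ε / 2) ∩ Completion.map φ ⁻¹' Metric.ball 0 δ) :=
      Metric.isOpen_ball.inter (Metric.isOpen_ball.preimage Completion.continuous_map)
    obtain ⟨u, hux, huδ⟩ := Completion.denseRange_coe.exists_mem_open hopen
      ⟨x, Metric.mem_ball_self (half_pos hε), by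
        rw [Set.mem_preimage, show Completion.map φ x = 0 from hx]; exact Metric.mem_ball_self hδ⟩
    rw [Set.mem_preimage, Completion.map_coe hφ.uniformContinuous, mem_ball_zero_iff,
      Completion.norm_coe] at huδ
    obtain ⟨y, hyu, hy⟩ := hlift u huδ
    refine ⟨↑(u - y), ⟨u - y, by simp [hyu], rfl⟩, ?_⟩
    calc dist x ↑(u - y) ≤ dist x ↑u + dist (↑u : Completion M) ↑(u - y) := dist_triangle _ _ _
      _ < ε / 2 + ε / 2 := by
        refine add_lt_add (by rwa [dist_comm]) ?_
        rwa [Completion.dist_eq, dist_eq_norm, sub_sub_cancel]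
      _ = ε := add_halves ε
  · rintro _ ⟨m, hm, rfl⟩
    show Completion.map φ m = 0
    rw [Completion.map_coe hφ.uniformContinuous, show φ m = 0 from hm,
      Completion.coe_zero]

theorem exists_completion_map_eq_of_mem_closure (hφ : IsStrictMap φ) :
    ∀ ε > (0 : ℝ), ∃ δ > (0 : ℝ), ∀ b ∈ closure (Set.range (Completion.map φ)), ‖b‖ < δ →
      ∃ x, Completion.map φ x = b ∧ ‖x‖ < ε := by
  let F := (φ : M →+ N).completion hφ.1
  refine F.exists_preimage_norm_lt_of_mem_closure_image_ball Completion.continuous_map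
    F.range.le_topologicalClosure fun ε hε => ?_
  obtain ⟨δ, hδ, hlift⟩ := hφ.2 ε hε
  refine ⟨δ, hδ, fun b hb hbδ => ?_⟩
  have hb' : b ∈ closure ((↑) '' Set.range φ) := by
    rwa [← Completion.closure_range_map hφ.uniformContinuous]
  refine closure_mono ?_ (Metric.isOpen_ball.inter_closure ⟨mem_ball_zero_iff.2 hbδ, hb'⟩)
  rintro _ ⟨hmδ, _, ⟨m, rfl⟩, rfl⟩
  rw [mem_ball_zero_iff, Completion.norm_coe] at hmδ
  obtain ⟨y, hym, hy⟩ := hlift m hmδ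
  exact ⟨y, by rwa [mem_ball_zero_iff, Completion.norm_coe],
    by rw [← hym]; exact Completion.map_coe hφ.uniformContinuous y⟩

theorem completion_map (hφ : IsStrictMap φ) : IsStrictMap (Completion.map φ) := by
  refine ⟨Completion.continuous_map, fun ε hε => ?_⟩
  obtain ⟨δ, hδ, hlift⟩ := hφ.exists_completion_map_eq_of_mem_closure ε hε
  exact ⟨δ, hδ, fun x hx => hlift _ (subset_closure ⟨x, rfl⟩) hx⟩

theorem range_completion_map (hφ : IsStrictMap φ) :
    Set.range (Completion.map φ) = closure ((↑) '' Set.range φ) := by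
  rw [← Completion.closure_range_map hφ.uniformContinuous]
  refine subset_closure.antisymm fun b hb => ?_
  let F := (φ : M →+ N).completion hφ.1
  obtain ⟨δ, hδ, hlift⟩ := hφ.exists_completion_map_eq_of_mem_closure 1 one_pos
  obtain ⟨_, ⟨a, rfl⟩, hba⟩ := Metric.mem_closure_iff.1 hb δ hδ
  have hmem : b - F a ∈ F.range.topologicalClosure :=
    sub_mem (show b ∈ F.range.topologicalClosure from hb) (F.range.le_topologicalClosure ⟨a, rfl⟩)
  obtain ⟨x, hx, -⟩ := hlift _ hmem (by rwa [← dist_eq_norm])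
  exact ⟨x + a, show F (x + a) = b by rw [map_add, show F x = b - F a from hx, sub_add_cancel]⟩

end IsStrictMap

theorem stmt_15_general {A : Type*} [NormedRing A]
    {M N : Type*} [SeminormedAddCommGroup M] [SeminormedAddCommGroup N]
    [Module A M] [Module A N]
    (φ : M →ₗ[A] N) (hφ : IsStrictMap (φ : M → N)) :
    IsStrictMap (Completion.map (φ : M → N)) ∧
    {x : Completion M | Completion.map (φ : M → N) x = 0} =
      closure ((fun m : M => (m : Completion M)) '' (LinearMap.ker φ : Set M)) ∧
    Set.range (Completion.map (φ : M → N)) =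
      closure ((fun n : N => (n : Completion N)) '' Set.range (φ : M → N)) ∧
    (∀ (P : Type*) [SeminormedAddCommGroup P],
      ∀ [Module A P] [IsBoundedSMul A P] (ψ : N →ₗ[A] P),
        IsStrictMap (ψ : N → P) → Function.Exact (φ : M → N) (ψ : N → P) →
          Function.Exact (Completion.map (φ : M → N)) (Completion.map (ψ : N → P))) := by
  refine ⟨hφ.completion_map, hφ.setOf_completion_map_eq_zero, hφ.range_completion_map,
    fun P _ _ _ ψ hψ hexact y => ?_⟩
  have hker : {n : N | ψ n = 0} = Set.range φ := Set.ext hexact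
  have hker' : {z | Completion.map ψ z = 0} = Set.range (Completion.map φ) := by
    rw [hψ.setOf_completion_map_eq_zero, hker, hφ.range_completion_map]
  exact Set.ext_iff.1 hker' y

/-- Let `K` be a discretely valued nonarchimedean field and `A` a
normed `K`-algebra.  If `φ : M → N` is a strict morphism of semi-normed `A`-modules,
then its completion `φ̂ : M̂ → N̂` is strict, `ker φ̂` is the completion (closure of the
image) of `ker φ`, and `im φ̂` is the completion of `im φ`.  Consequently any strict
exact pair of semi-normed `A`-modules stays exact after completion. -/
theorem stmt_15 {K : Type*} [NontriviallyNormedField K]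
    (π : K) (hπ0 : π ≠ 0) (hπ1 : ‖π‖ < 1)
    (hdisc : ∀ c : K, c ≠ 0 → ∃ k : ℤ, ‖c‖ = ‖π‖ ^ k)
    {A : Type*} [NormedRing A] [NormedAlgebra K A]
    {M N : Type*} [SeminormedAddCommGroup M] [SeminormedAddCommGroup N]
    [Module A M] [Module A N] [IsBoundedSMul A M] [IsBoundedSMul A N]
    (φ : M →ₗ[A] N) (hφ : IsStrictMap (φ : M → N)) :
    IsStrictMap (Completion.map (φ : M → N)) ∧
    {x : Completion M | Completion.map (φ : M → N) x = 0} =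
      closure ((fun m : M => (m : Completion M)) '' (LinearMap.ker φ : Set M)) ∧
    Set.range (Completion.map (φ : M → N)) =
      closure ((fun n : N => (n : Completion N)) '' Set.range (φ : M → N)) ∧
    (∀ (P : Type*) [SeminormedAddCommGroup P],
      ∀ [Module A P] [IsBoundedSMul A P] (ψ : N →ₗ[A] P),
        IsStrictMap (ψ : N → P) → Function.Exact (φ : M → N) (ψ : N → P) →
          Function.Exact (Completion.map (φ : M → N)) (Completion.map (ψ : N → P))) :=
  stmt_15_general φ hφ
end
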